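/- arXiv:1304.2791 — 5 statements merged into one kernel-verified Lean document; each statement's English description precedes it below -/
import Mathlib

section
/- For all β > 0 and K > 0, the second derivative of G_{β,K} at 0 equals G_{β,K}''(0) = 2βK(e^β + 2 − 4βK)/(e^β + 2). In particular, G_{β,K}''(0) = 0 if and only if K = (e^β + 2)/(4β). -/
noncomputable def cgf (β t : ℝ) : ℝ :=
  Real.log ((1 + Real.exp (-β) * (Real.exp t + Real.exp (-t))) / (1 + 2 * Real.exp (-β)))

noncomputable def G (β K x : ℝ) : ℝ := β * K * x ^ 2 - cgf β (2 * β * K * x)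

open Real in
lemma hasDerivAt_expN (t : ℝ) : HasDerivAt (fun s : ℝ => Real.exp (-s)) (-Real.exp (-t)) t := by
  simpa [Function.comp_def] using (Real.hasDerivAt_exp (-t)).comp t (hasDerivAt_neg t)

open Real in
lemma hasDerivAt_den (a t : ℝ) :
    HasDerivAt (fun s : ℝ => 1 + a * (Real.exp s + Real.exp (-s)))
      (a * (Real.exp t - Real.exp (-t))) t := by
  have h := (((Real.hasDerivAt_exp t).add (hasDerivAt_expN t)).const_mul a).const_add 1
  simpa [sub_eq_add_neg] using h

open Real in
lemma hasDerivAt_cgf (β t : ℝ) :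
    HasDerivAt (cgf β)
      (Real.exp (-β) * (Real.exp t - Real.exp (-t)) /
        (1 + Real.exp (-β) * (Real.exp t + Real.exp (-t)))) t := by
  set a := Real.exp (-β) with ha_def
  have ha : 0 < a := Real.exp_pos _
  have hfun : cgf β = fun s =>
      Real.log (1 + a * (Real.exp s + Real.exp (-s))) - Real.log (1 + 2 * a) := by
    funext s
    unfold cgf
    rw [Real.log_div (by positivity) (by positivity)]
  rw [hfun]
  have hpos : (0:ℝ) < 1 + a * (Real.exp t + Real.exp (-t)) := by positivity
  exact ((hasDerivAt_den a t).log hpos.ne').sub_const _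

open Real in
lemma hasDerivAt_G (β K x : ℝ) :
    HasDerivAt (G β K)
      (2 * β * K * x - 2 * β * K *
        (Real.exp (-β) * (Real.exp (2 * β * K * x) - Real.exp (-(2 * β * K * x))) /
          (1 + Real.exp (-β) * (Real.exp (2 * β * K * x) + Real.exp (-(2 * β * K * x)))))) x := by
  have h1 : HasDerivAt (fun y : ℝ => β * K * y ^ 2) (β * K * (2 * x)) x := by
    simpa using ((hasDerivAt_pow 2 x).const_mul (β * K))
  have h2 : HasDerivAt (fun y : ℝ => 2 * β * K * y) (2 * β * K) x := by
    simpa using (hasDerivAt_id x).const_mul (2 * β * K)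
  have h3 := (hasDerivAt_cgf β (2 * β * K * x)).comp x h2
  have h4 := h1.sub h3
  have : G β K = fun y => β * K * y ^ 2 - cgf β (2 * β * K * y) := rfl
  rw [this]
  convert h4 using 1
  exacts [rfl, rfl, rfl, by ring]

theorem stmt_2 (β K : ℝ) (hβ : 0 < β) (hK : 0 < K) :
    iteratedDeriv 2 (G β K) 0 =
      2 * β * K * (Real.exp β + 2 - 4 * β * K) / (Real.exp β + 2) ∧
    (iteratedDeriv 2 (G β K) 0 = 0 ↔ K = (Real.exp β + 2) / (4 * β)) := by
  set a := Real.exp (-β) with ha_def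
  have ha : 0 < a := Real.exp_pos _
  set c := 2 * β * K with hc_def
  -- first derivative as a function
  have hderiv : deriv (G β K) = fun x =>
      c * x - c * (a * (Real.exp (c * x) - Real.exp (-(c * x))) /
        (1 + a * (Real.exp (c * x) + Real.exp (-(c * x))))) := by
    funext x
    exact (hasDerivAt_G β K x).deriv
  -- second derivative at 0
  have hcx : HasDerivAt (fun x : ℝ => c * x) c 0 := by
    simpa using (hasDerivAt_id (0:ℝ)).const_mul c
  have hu : HasDerivAt (fun x : ℝ => a * (Real.exp (c * x) - Real.exp (-(c * x))))
      (a * (c + c)) 0 := by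
    have := (((Real.hasDerivAt_exp (c * 0)).comp 0 hcx).sub
      ((hasDerivAt_expN (c * 0)).comp 0 hcx)).const_mul a
    simpa [mul_comm, sub_neg_eq_add, mul_add] using this
  have hv : HasDerivAt (fun x : ℝ => 1 + a * (Real.exp (c * x) + Real.exp (-(c * x))))
      0 0 := by
    have := ((hasDerivAt_den a (c * 0)).comp 0 hcx)
    simpa [Function.comp_def] using this
  have hv0 : (1 : ℝ) + a * (Real.exp (c * 0) + Real.exp (-(c * 0))) ≠ 0 := by
    positivity
  have hq := hu.div hv hv0
  have hid : HasDerivAt (fun x : ℝ => c * x) c 0 := hcx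
  have hG2 : HasDerivAt (deriv (G β K)) (c - c * ((a * (c + c) * (1 + a * (1 + 1)) - 0) /
      (1 + a * (1 + 1)) ^ 2)) 0 := by
    rw [hderiv]
    have := hid.sub ((hq.const_mul c))
    simpa [mul_comm, Pi.sub_def] using this
  have hval : iteratedDeriv 2 (G β K) 0 =
      c - c * ((a * (c + c) * (1 + a * (1 + 1)) - 0) / (1 + a * (1 + 1)) ^ 2) := by
    rw [show (2:ℕ) = 1 + 1 from rfl, iteratedDeriv_succ, iteratedDeriv_one]
    exact hG2.deriv
  have hE : (0:ℝ) < Real.exp β := Real.exp_pos β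
  have hE2 : Real.exp β + 2 ≠ 0 := by positivity
  have ha12 : (1:ℝ) + a * (1 + 1) ≠ 0 := by positivity
  have hmain : iteratedDeriv 2 (G β K) 0 =
      2 * β * K * (Real.exp β + 2 - 4 * β * K) / (Real.exp β + 2) := by
    rw [hval, hc_def, ha_def, Real.exp_neg]
    field_simp
    ring
  refine ⟨hmain, ?_⟩
  rw [hmain, div_eq_zero_iff]
  constructor
  · rintro (h | h)
    · have h4 : Real.exp β + 2 - 4 * β * K = 0 := by
        rcases mul_eq_zero.1 h with h' | h'
        · nlinarith
        · exact h'
      field_simp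
      linarith
    · exact absurd h hE2
  · intro h
    left
    rw [h]
    field_simp
    ring
end

section
/- For all β > 0 and K > 0, the fourth derivative of G_{β,K} at 0 equals G_{β,K}^{(4)}(0) = 2(2βK)⁴(4 − e^β)/(e^β + 2)². In particular, at K = K_c(β) = (e^β + 2)/(4β), G_{β,K_c(β)}^{(4)}(0) > 0 if and only if e^β < 4, i.e. β < log 4. -/
noncomputable def Kc (β : ℝ) : ℝ := (Real.exp β + 2) / (4 * β)


noncomputable def uu (E c x : ℝ) : ℝ := E + Real.exp (c*x) + Real.exp (-(c*x))
noncomputable def vv (c x : ℝ) : ℝ := Real.exp (c*x) - Real.exp (-(c*x))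

lemma upos (E c x : ℝ) (hE : 0 < E) : 0 < uu E c x := by
  unfold uu; positivity

lemma hexp1 (c x : ℝ) : HasDerivAt (fun y : ℝ => Real.exp (c*y)) (c * Real.exp (c*x)) x := by
  have := (Real.hasDerivAt_exp (c*x)).comp x ((hasDerivAt_id x).const_mul c)
  simpa [Function.comp_def, mul_comm] using this

lemma hexp2 (c x : ℝ) : HasDerivAt (fun y : ℝ => Real.exp (-(c*y))) (-(c * Real.exp (-(c*x)))) x := by
  have := (Real.hasDerivAt_exp (-(c*x))).comp x (((hasDerivAt_id x).const_mul c).neg)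
  simpa [Function.comp_def, mul_comm] using this

lemma huu (E c x : ℝ) : HasDerivAt (uu E c) (c * vv c x) x := by
  unfold uu vv
  have := ((hasDerivAt_const x E).add (hexp1 c x)).add (hexp2 c x)
  refine this.congr_deriv ?_
  ring

lemma hvv (E c x : ℝ) : HasDerivAt (vv c) (c * (uu E c x - E)) x := by
  unfold uu vv
  have := (hexp1 c x).sub (hexp2 c x)
  refine this.congr_deriv ?_
  ring

lemma d0 (E c a : ℝ) (hE : 0 < E) (x : ℝ) :
    HasDerivAt (fun x => a*x^2 - (Real.log (uu E c x) - Real.log (E+2)))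
      (2*a*x - c * (vv c x / uu E c x)) x := by
  have hne : uu E c x ≠ 0 := ne_of_gt (upos E c x hE)
  have := (((hasDerivAt_pow 2 x).const_mul a)).sub
    (((huu E c x).log hne).sub_const (Real.log (E+2)))
  refine this.congr_deriv ?_
  push_cast
  ring

lemma d1 (E c a : ℝ) (hE : 0 < E) (x : ℝ) :
    HasDerivAt (fun x => 2*a*x - c * (vv c x / uu E c x))
      (2*a - c^2 * (((uu E c x - E) * uu E c x - (vv c x)^2) / (uu E c x)^2)) x := by
  have hne : uu E c x ≠ 0 := ne_of_gt (upos E c x hE)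
  have := (((hasDerivAt_id x).const_mul (2*a))).sub
    (((hvv E c x).div (huu E c x) hne).const_mul c)
  refine this.congr_deriv ?_
  field_simp

lemma d2 (E c a : ℝ) (hE : 0 < E) (x : ℝ) :
    HasDerivAt (fun x => 2*a - c^2 * (((uu E c x - E) * uu E c x - (vv c x)^2) / (uu E c x)^2))
      (-(c^3) * (vv c x * (3*E*uu E c x - 2*(uu E c x)^2 + 2*(vv c x)^2) / (uu E c x)^3)) x := by
  have hne : uu E c x ≠ 0 := ne_of_gt (upos E c x hE)
  have hN : HasDerivAt (fun x => (uu E c x - E) * uu E c x - (vv c x)^2)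
      ((c * vv c x) * uu E c x + (uu E c x - E) * (c * vv c x)
        - 2 * vv c x ^ 1 * (c * (uu E c x - E))) x :=
    (((huu E c x).sub_const E).mul (huu E c x)).sub ((hvv E c x).pow 2)
  have hD : HasDerivAt (fun x => (uu E c x)^2) (2 * uu E c x ^ 1 * (c * vv c x)) x :=
    (huu E c x).pow 2
  have := (hasDerivAt_const x (2*a)).sub ((hN.div hD (pow_ne_zero 2 hne)).const_mul (c^2))
  refine this.congr_deriv ?_
  field_simp
  ring

lemma d3 (E c : ℝ) (hE : 0 < E) :
    HasDerivAt (fun x => -(c^3) * (vv c x * (3*E*uu E c x - 2*(uu E c x)^2 + 2*(vv c x)^2) / (uu E c x)^3))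
      (2*c^4*(4-E)/(E+2)^2) 0 := by
  have hne : uu E c 0 ≠ 0 := ne_of_gt (upos E c 0 hE)
  have hM : HasDerivAt (fun x => 3*E*uu E c x - 2*(uu E c x)^2 + 2*(vv c x)^2)
      ((3*E) * (c * vv c 0) - 2 * (2 * uu E c 0 ^ 1 * (c * vv c 0))
        + 2 * (2 * vv c 0 ^ 1 * (c * (uu E c 0 - E)))) 0 := by
    have := (((huu E c 0).const_mul (3*E)).sub (((huu E c 0).pow 2).const_mul 2)).add
      (((hvv E c 0).pow 2).const_mul 2)
    refine this.congr_deriv ?_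
    norm_num
  have hnum := (hvv E c 0).mul hM
  have hden : HasDerivAt (fun x => (uu E c x)^3) (3 * uu E c 0 ^ 2 * (c * vv c 0)) 0 :=
    (huu E c 0).pow 3
  have := ((hnum.div hden (pow_ne_zero 3 hne)).const_mul (-(c^3)))
  refine this.congr_deriv ?_
  have hu0 : uu E c 0 = E + 2 := by simp [uu]; ring
  have hv0 : vv c 0 = 0 := by simp [vv]
  rw [hu0, hv0]
  have h2 : (0:ℝ) < E + 2 := by linarith
  field_simp
  ring

lemma core (E c a : ℝ) (hE : 0 < E) :
    iteratedDeriv 4 (fun x : ℝ => a*x^2 - (Real.log (uu E c x) - Real.log (E+2))) 0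
      = 2*c^4*(4-E)/(E+2)^2 := by
  have e1 : deriv (fun x : ℝ => a*x^2 - (Real.log (uu E c x) - Real.log (E+2)))
      = fun x => 2*a*x - c * (vv c x / uu E c x) :=
    funext fun x => (d0 E c a hE x).deriv
  have e2 : deriv (fun x : ℝ => 2*a*x - c * (vv c x / uu E c x))
      = fun x => 2*a - c^2 * (((uu E c x - E) * uu E c x - (vv c x)^2) / (uu E c x)^2) :=
    funext fun x => (d1 E c a hE x).deriv
  have e3 : deriv (fun x : ℝ => 2*a - c^2 * (((uu E c x - E) * uu E c x - (vv c x)^2) / (uu E c x)^2))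
      = fun x => -(c^3) * (vv c x * (3*E*uu E c x - 2*(uu E c x)^2 + 2*(vv c x)^2) / (uu E c x)^3) :=
    funext fun x => (d2 E c a hE x).deriv
  have e0 : iteratedDeriv 4 (fun x : ℝ => a*x^2 - (Real.log (uu E c x) - Real.log (E+2)))
      = deriv (deriv (deriv (deriv (fun x : ℝ => a*x^2 - (Real.log (uu E c x) - Real.log (E+2)))))) := by
    rw [show (4:ℕ) = 3+1 from rfl, iteratedDeriv_succ, show (3:ℕ) = 2+1 from rfl, iteratedDeriv_succ,
      show (2:ℕ) = 1+1 from rfl, iteratedDeriv_succ, iteratedDeriv_one]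
  rw [e0, e1, e2, e3]
  exact (d3 E c hE).deriv

theorem stmt_3 (β : ℝ) (hβ : 0 < β) :
    (∀ K : ℝ, 0 < K →
      iteratedDeriv 4 (G β K) 0 =
        2 * (2 * β * K) ^ 4 * (4 - Real.exp β) / (Real.exp β + 2) ^ 2) ∧
    (0 < iteratedDeriv 4 (G β (Kc β)) 0 ↔ β < Real.log 4) := by
  have hE : 0 < Real.exp β := Real.exp_pos β
  have key : ∀ K : ℝ, iteratedDeriv 4 (G β K) 0 =
      2 * (2 * β * K) ^ 4 * (4 - Real.exp β) / (Real.exp β + 2) ^ 2 := by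
    intro K
    have hGeq : G β K = fun x => β*K*x^2 -
        (Real.log (uu (Real.exp β) (2*β*K) x) - Real.log (Real.exp β + 2)) := by
      funext x
      unfold G cgf uu
      have harg : (1 + Real.exp (-β) * (Real.exp (2*β*K*x) + Real.exp (-(2*β*K*x))))
            / (1 + 2 * Real.exp (-β))
          = (Real.exp β + Real.exp (2*β*K*x) + Real.exp (-(2*β*K*x))) / (Real.exp β + 2) := by
        rw [Real.exp_neg]
        field_simp
        ring
      rw [harg, Real.log_div (by positivity) (by positivity)]
    rw [hGeq, core (Real.exp β) (2*β*K) (β*K) hE]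
  refine ⟨fun K _ => key K, ?_⟩
  rw [key (Kc β)]
  have hc : 2*β*Kc β = (Real.exp β + 2)/2 := by
    unfold Kc
    field_simp
    ring
  rw [hc]
  have h2 : (0:ℝ) < Real.exp β + 2 := by linarith
  have hval : 2 * ((Real.exp β + 2)/2) ^ 4 * (4 - Real.exp β) / (Real.exp β + 2) ^ 2
      = (Real.exp β + 2)^2/8 * (4 - Real.exp β) := by
    field_simp
    ring
  rw [hval]
  have hpos : (0:ℝ) < (Real.exp β + 2)^2/8 := by positivity
  rw [mul_pos_iff_of_pos_left hpos, sub_pos, ← Real.lt_log_iff_exp_lt (by norm_num)]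
end

section
/- In the BEG model, for i ≠ j, the conditional expectation E[ω_i² ω_j² | (ω_l)_{l∉{i,j}}] equals (2e^{-2β} + 2e^{-2β+4βK/n} cosh(4βK S_n^{i,j}/n)) / (1 + 4e^{-β+βK/n} cosh(2βK S_n^{i,j}/n) + 2e^{-2β} + 2e^{-2β+4βK/n} cosh(4βK S_n^{i,j}/n)), where S_n^{i,j} = Σ_{t∉{i,j}} ω_t. -/
/-- The spin values of the BEG model. -/
noncomputable def spins : Finset ℝ := {-1, 0, 1}

/-- The (unnormalised) Gibbs weight of a configuration in the BEG model. -/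
noncomputable def wBEG (n : ℕ) (β K : ℝ) (ω : Fin n → ℝ) : ℝ :=
  Real.exp (-β * ∑ j, (ω j) ^ 2 + (β * K / n) * (∑ j, ω j) ^ 2)

lemma sum_upd {n : ℕ} (f : Fin n → ℝ) {i j : Fin n} (hij : i ≠ j) (a b : ℝ) :
    ∑ l, Function.update (Function.update f i a) j b l
      = (∑ l, f l) - f i - f j + a + b := by
  classical
  rw [Finset.sum_update_of_mem (Finset.mem_univ j)]
  rw [Finset.sum_update_of_mem (by simp [hij] : i ∈ Finset.univ \ {j})]
  have h1 : ∑ x ∈ (Finset.univ \ {j}) \ {i}, f x = (∑ l, f l) - f j - f i := by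
    rw [Finset.sum_sdiff_eq_sub (by simp [hij] : {i} ⊆ Finset.univ \ {j}),
      Finset.sum_sdiff_eq_sub (Finset.subset_univ _)]
    simp
  rw [h1]; ring

lemma sum_upd_sq {n : ℕ} (f : Fin n → ℝ) {i j : Fin n} (hij : i ≠ j) (a b : ℝ) :
    ∑ l, (Function.update (Function.update f i a) j b l) ^ 2
      = (∑ l, (f l) ^ 2) - (f i) ^ 2 - (f j) ^ 2 + a ^ 2 + b ^ 2 := by
  have h : ∀ l, (Function.update (Function.update f i a) j b l) ^ 2
      = Function.update (Function.update (fun l => (f l) ^ 2) i (a ^ 2)) j (b ^ 2) l := by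
    intro l
    rcases eq_or_ne l j with rfl | hlj
    · simp
    · rcases eq_or_ne l i with rfl | hli
      · simp [Function.update_of_ne hlj]
      · simp [Function.update_of_ne hlj, Function.update_of_ne hli]
  simp only [h]
  have := sum_upd (fun l => (f l) ^ 2) hij (a ^ 2) (b ^ 2)
  simpa using this

set_option maxHeartbeats 1000000 in
theorem stmt_13 (n : ℕ) (hn : 2 ≤ n) (β K : ℝ) (hβ : 0 < β) (hK : 0 < K)
    (ω : Fin n → ℝ) (hω : ∀ l, ω l ∈ spins) (i j : Fin n) (hij : i ≠ j) :
    (∑ t ∈ spins, ∑ s ∈ spins,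
        t ^ 2 * s ^ 2 * wBEG n β K (Function.update (Function.update ω i t) j s)) /
      (∑ t ∈ spins, ∑ s ∈ spins,
        wBEG n β K (Function.update (Function.update ω i t) j s)) =
    (2 * Real.exp (-2 * β) + 2 * Real.exp (-2 * β + 4 * β * K / n) *
        Real.cosh (4 * β * K * ((∑ l, ω l) - ω i - ω j) / n)) /
      (1 + 4 * Real.exp (-β + β * K / n) *
          Real.cosh (2 * β * K * ((∑ l, ω l) - ω i - ω j) / n) +
        2 * Real.exp (-2 * β) + 2 * Real.exp (-2 * β + 4 * β * K / n) *
          Real.cosh (4 * β * K * ((∑ l, ω l) - ω i - ω j) / n)) := by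
  have hsum : ∀ g : ℝ → ℝ, ∑ t ∈ spins, g t = g (-1) + g 0 + g 1 := by
    intro g
    have e1 : (-1 : ℝ) ∉ ({0, 1} : Finset ℝ) := by norm_num
    have e2 : (0 : ℝ) ∉ ({1} : Finset ℝ) := by norm_num
    simp only [spins]
    rw [Finset.sum_insert e1, Finset.sum_insert e2, Finset.sum_singleton]
    ring
  have hupd : ∀ t s : ℝ,
      wBEG n β K (Function.update (Function.update ω i t) j s) =
      Real.exp (-β * ((∑ l, (ω l) ^ 2) - (ω i) ^ 2 - (ω j) ^ 2 + t ^ 2 + s ^ 2)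
        + (β * K / n) * ((∑ l, ω l) - ω i - ω j + t + s) ^ 2) := by
    intro t s
    unfold wBEG
    rw [sum_upd ω hij, sum_upd_sq ω hij]
  set q := ∑ l, (ω l) ^ 2 with hq
  set Z := ∑ l, ω l with hZ
  have hC : Real.exp (-β * (q - (ω i) ^ 2 - (ω j) ^ 2)
      + (β * K / n) * (Z - ω i - ω j) ^ 2) ≠ 0 := Real.exp_ne_zero _
  have hnum :
      (∑ t ∈ spins, ∑ s ∈ spins,
        t ^ 2 * s ^ 2 * wBEG n β K (Function.update (Function.update ω i t) j s)) =
      Real.exp (-β * (q - (ω i) ^ 2 - (ω j) ^ 2)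
        + (β * K / n) * (Z - ω i - ω j) ^ 2) *
      (2 * Real.exp (-2 * β) + 2 * Real.exp (-2 * β + 4 * β * K / n) *
        Real.cosh (4 * β * K * (Z - ω i - ω j) / n)) := by
    simp only [hsum, hupd]
    rw [Real.cosh_eq]
    ring_nf
    simp only [← Real.exp_add]
    ring_nf
  have hden :
      (∑ t ∈ spins, ∑ s ∈ spins,
        wBEG n β K (Function.update (Function.update ω i t) j s)) =
      Real.exp (-β * (q - (ω i) ^ 2 - (ω j) ^ 2)
        + (β * K / n) * (Z - ω i - ω j) ^ 2) *
      (1 + 4 * Real.exp (-β + β * K / n) *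
          Real.cosh (2 * β * K * (Z - ω i - ω j) / n) +
        2 * Real.exp (-2 * β) + 2 * Real.exp (-2 * β + 4 * β * K / n) *
          Real.cosh (4 * β * K * (Z - ω i - ω j) / n)) := by
    simp only [hsum, hupd]
    rw [Real.cosh_eq, Real.cosh_eq]
    ring_nf
    simp only [← Real.exp_add]
    ring_nf
  rw [hnum, hden, mul_div_mul_left _ _ hC]
end

section
/- With K_n = K_c(β_n) − k/n^{Δ₂}, where K_c(β) = (e^β + 2)/(4β) and (β_n) is a positive bounded sequence bounded away from 0 converging to some β > 0, the second derivative satisfies G_{β_n,K_n}''(0) = (k/n^{Δ₂}) · C_n^{(2)} with C_n^{(2)} = 2β_n K_n / K_c(β_n), and n^{Δ₂} · G_{β_n,K_n}''(0) → 2βk as n → ∞. -/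
lemma Npos (β t : ℝ) : 0 < 1 + Real.exp (-β) * (Real.exp t + Real.exp (-t)) := by positivity

lemma cgf_eq (β t : ℝ) : cgf β t =
    Real.log (1 + Real.exp (-β) * (Real.exp t + Real.exp (-t))) -
      Real.log (1 + 2 * Real.exp (-β)) := by
  unfold cgf
  rw [Real.log_div (Npos β t).ne' (by positivity)]

noncomputable def D1 (β K x : ℝ) : ℝ :=
  2*β*K*x - Real.exp (-β) * (2*β*K*Real.exp (2*β*K*x) - 2*β*K*Real.exp (-(2*β*K*x))) /
    (1 + Real.exp (-β) * (Real.exp (2*β*K*x) + Real.exp (-(2*β*K*x))))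

lemma hasDerivAt_inner (β K x : ℝ) :
    HasDerivAt (fun y => 1 + Real.exp (-β) * (Real.exp (2*β*K*y) + Real.exp (-(2*β*K*y))))
      (Real.exp (-β) * (2*β*K*Real.exp (2*β*K*x) - 2*β*K*Real.exp (-(2*β*K*x)))) x := by
  have h1 : HasDerivAt (fun y : ℝ => 2*β*K*y) (2*β*K) x := by
    simpa using (hasDerivAt_id x).const_mul (2*β*K)
  have := ((h1.exp.add (h1.neg.exp)).const_mul (Real.exp (-β))).const_add 1
  refine this.congr_deriv ?_
  simp only [Pi.neg_apply]
  ring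

lemma hasDerivAt_G_s17 (β K x : ℝ) : HasDerivAt (G β K) (D1 β K x) x := by
  have hfun : G β K = fun y => β*K*y^2 -
      Real.log (1 + Real.exp (-β) * (Real.exp (2*β*K*y) + Real.exp (-(2*β*K*y)))) +
      Real.log (1 + 2 * Real.exp (-β)) := by
    funext y
    simp only [G, cgf_eq]
    ring
  rw [hfun]
  have h1 : HasDerivAt (fun y : ℝ => β*K*y^2) (β*K*(2*x)) x := by
    simpa using (hasDerivAt_pow 2 x).const_mul (β*K)
  have hlog := (hasDerivAt_inner β K x).log (Npos β (2*β*K*x)).ne'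
  have := (h1.sub hlog).add_const (Real.log (1 + 2 * Real.exp (-β)))
  refine this.congr_deriv ?_
  unfold D1
  ring

lemma hasDerivAt_D1 (β K : ℝ) :
    HasDerivAt (D1 β K) (2*β*K - 8*β^2*K^2*Real.exp (-β)/(1+2*Real.exp (-β))) 0 := by
  have h1 : ∀ x : ℝ, HasDerivAt (fun y : ℝ => 2*β*K*y) (2*β*K) x := fun x => by
    simpa using (hasDerivAt_id x).const_mul (2*β*K)
  have hg := ((((h1 0).exp.const_mul (2*β*K)).sub
    (((h1 0).neg.exp.const_mul (2*β*K)))).const_mul (Real.exp (-β)))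
  have hN := hasDerivAt_inner β K 0
  have hN0 : (1 + Real.exp (-β) * (Real.exp (2*β*K*(0:ℝ)) + Real.exp (-(2*β*K*(0:ℝ))))) ≠ 0 :=
    (Npos β (2*β*K*(0:ℝ))).ne'
  have hdiv := hg.div hN hN0
  have htot := (h1 0).sub hdiv
  have : HasDerivAt (D1 β K) _ 0 := htot
  refine this.congr_deriv ?_
  have hD : (0:ℝ) < 1 + 2 * Real.exp (-β) := by positivity
  simp only [mul_zero, Real.exp_zero, Pi.neg_apply, Pi.sub_apply, neg_zero]
  field_simp
  ring

lemma second_deriv (β K : ℝ) :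
    iteratedDeriv 2 (G β K) 0 = 2*β*K - 8*β^2*K^2*Real.exp (-β)/(1+2*Real.exp (-β)) := by
  have h1 : deriv (G β K) = D1 β K := funext fun x => (hasDerivAt_G_s17 β K x).deriv
  rw [show (2:ℕ) = 1 + 1 from rfl, iteratedDeriv_succ, iteratedDeriv_one, h1]
  exact (hasDerivAt_D1 β K).deriv

lemma alg (β k p K : ℝ) (hβ : 0 < β) (hp : 0 < p) (hK : K = Kc β - k / p) :
    2*β*K - 8*β^2*K^2*Real.exp (-β)/(1+2*Real.exp (-β)) = (k/p) * (2*β*K/Kc β) := by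
  have hE : 0 < Real.exp β := Real.exp_pos β
  have hE2 : Real.exp β + 2 ≠ 0 := by positivity
  have hD : (1:ℝ) + 2 * Real.exp (-β) ≠ 0 := by positivity
  subst hK
  unfold Kc
  rw [Real.exp_neg]
  field_simp
  ring

theorem stmt_17 (β k Δ₂ : ℝ) (hβ : 0 < β) (hk : k ≠ 0) (hΔ₂ : 0 < Δ₂)
    (βseq : ℕ → ℝ) (hβpos : ∀ n, 0 < βseq n) (hbdd : ∃ M : ℝ, ∀ n, βseq n ≤ M)
    (hβtend : Filter.Tendsto βseq Filter.atTop (nhds β))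
    (Kseq : ℕ → ℝ) (hKseq : ∀ n, Kseq n = Kc (βseq n) - k / (n : ℝ) ^ Δ₂) :
    (∀ n : ℕ, 1 ≤ n →
      iteratedDeriv 2 (G (βseq n) (Kseq n)) 0 =
        (k / (n : ℝ) ^ Δ₂) * (2 * βseq n * Kseq n / Kc (βseq n))) ∧
    Filter.Tendsto (fun n : ℕ => (n : ℝ) ^ Δ₂ * iteratedDeriv 2 (G (βseq n) (Kseq n)) 0)
      Filter.atTop (nhds (2 * β * k)) := by
  have hpos : ∀ n : ℕ, 1 ≤ n → (0:ℝ) < (n:ℝ) ^ Δ₂ := by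
    intro n hn
    have : (0:ℝ) < (n:ℝ) := by exact_mod_cast hn
    positivity
  have part1 : ∀ n : ℕ, 1 ≤ n →
      iteratedDeriv 2 (G (βseq n) (Kseq n)) 0 =
        (k / (n : ℝ) ^ Δ₂) * (2 * βseq n * Kseq n / Kc (βseq n)) := by
    intro n hn
    rw [second_deriv]
    exact alg (βseq n) k ((n:ℝ)^Δ₂) (Kseq n) (hβpos n) (hpos n hn) (hKseq n)
  refine ⟨part1, ?_⟩
  have hKc_pos : (0:ℝ) < Kc β := by unfold Kc; positivity
  have hKcCont : ContinuousAt Kc β := by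
    unfold Kc
    exact (Real.continuous_exp.continuousAt.add continuousAt_const).div
      (continuousAt_const.mul continuousAt_id) (by positivity)
  have hKctend : Filter.Tendsto (fun n => Kc (βseq n)) Filter.atTop (nhds (Kc β)) :=
    hKcCont.tendsto.comp hβtend
  have hrp : Filter.Tendsto (fun n : ℕ => (n:ℝ)^Δ₂) Filter.atTop Filter.atTop :=
    (tendsto_rpow_atTop hΔ₂).comp tendsto_natCast_atTop_atTop
  have hp0 : Filter.Tendsto (fun n : ℕ => k / (n:ℝ)^Δ₂) Filter.atTop (nhds 0) := by
    simpa [div_eq_mul_inv] using hrp.inv_tendsto_atTop.const_mul k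
  have hKtend : Filter.Tendsto Kseq Filter.atTop (nhds (Kc β)) := by
    have := hKctend.sub hp0
    rw [sub_zero] at this
    exact this.congr fun n => (hKseq n).symm
  have hmain : Filter.Tendsto (fun n : ℕ => k * (2 * βseq n * Kseq n / Kc (βseq n)))
      Filter.atTop (nhds (2 * β * k)) := by
    have h := (((hβtend.const_mul 2).mul hKtend).div hKctend hKc_pos.ne').const_mul k
    convert h using 2
    · rfl
    rw [mul_div_assoc, div_self hKc_pos.ne']
    ring
  refine hmain.congr' ?_
  filter_upwards [Filter.eventually_ge_atTop 1] with n hn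
  rw [part1 n hn]
  field_simp
end

section
/- With β_n = log(e^{β_c} − b/n^{Δ₁}), β_c = log 4, b ≠ 0, Δ₁ > 0 (n large so that the argument of log is positive), and any sequence K_n → K_c(β_c) = 3/(2 log 4), the fourth derivative satisfies G_{β_n,K_n}^{(4)}(0) = (b/n^{Δ₁}) · 2(2β_n K_n)⁴/(e^{β_n}+2)², and hence n^{Δ₁} · G_{β_n,K_n}^{(4)}(0) → (9/2) b as n → ∞. -/
open Real

noncomputable def Qa (a c x : ℝ) : ℝ := 1 + a * (Real.exp (c*x) + (Real.exp (c*x))⁻¹)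

lemma Qa_pos (a c x : ℝ) (ha : 0 < a) : 0 < Qa a c x := by
  have h := Real.exp_pos (c*x)
  unfold Qa
  positivity

lemma hasDerivAt_ecx (c x : ℝ) :
    HasDerivAt (fun y => Real.exp (c*y)) (c * Real.exp (c*x)) x := by
  simpa [mul_comm, Function.comp_def] using (Real.hasDerivAt_exp (c*x)).comp x ((hasDerivAt_id x).const_mul c)

lemma hasDerivAt_Qa (a c x : ℝ) :
    HasDerivAt (fun y => Qa a c y)
      (a * c * (Real.exp (c*x) - (Real.exp (c*x))⁻¹)) x := by
  have h1 := hasDerivAt_ecx c x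
  have h2 := h1.inv (Real.exp_ne_zero _)
  have h3 := ((h1.add h2).const_mul a).const_add 1
  refine h3.congr_deriv ?_
  have hne : Real.exp (c*x) ≠ 0 := Real.exp_ne_zero _
  field_simp
  ring

lemma step1 (β K : ℝ) (x : ℝ) :
    HasDerivAt (G β K)
      (2*β*K*x - Real.exp (-β) * (2*β*K) *
        (Real.exp ((2*β*K)*x) - (Real.exp ((2*β*K)*x))⁻¹) / Qa (Real.exp (-β)) (2*β*K) x) x := by
  set a := Real.exp (-β) with ha_def
  have ha : 0 < a := Real.exp_pos _
  set c := 2*β*K with hc_def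
  have hG0 : G β K = fun y => β*K*y^2 + Real.log (1 + 2*a) - Real.log (Qa a c y) := by
    funext y
    unfold G cgf Qa
    rw [Real.exp_neg (2*β*K*y)]
    have h1 : (0:ℝ) < 1 + a * (Real.exp (c*y) + (Real.exp (c*y))⁻¹) := by
      have := Real.exp_pos (c*y); positivity
    have h2 : (0:ℝ) < 1 + 2*a := by positivity
    rw [show (2*β*K*y : ℝ) = c*y by rw [hc_def]]
    rw [show (1 + Real.exp (-β) * (Real.exp (c*y) + (Real.exp (c*y))⁻¹)) = 1 + a * (Real.exp (c*y) + (Real.exp (c*y))⁻¹) by rw [ha_def]]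
    rw [show (1 + 2 * Real.exp (-β) : ℝ) = 1 + 2*a by rw [ha_def]]
    rw [Real.log_div h1.ne' h2.ne']
    ring
  rw [hG0]
  have hpoly : HasDerivAt (fun y : ℝ => β*K*y^2 + Real.log (1 + 2*a)) (c*x) x := by
    have := ((hasDerivAt_pow 2 x).const_mul (β*K)).add_const (Real.log (1+2*a))
    refine this.congr_deriv ?_
    rw [hc_def]; ring
  have hlog : HasDerivAt (fun y => Real.log (Qa a c y))
      ((a * c * (Real.exp (c*x) - (Real.exp (c*x))⁻¹)) / Qa a c x) x :=
    (hasDerivAt_Qa a c x).log (Qa_pos a c x ha).ne'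
  exact hpoly.sub hlog

lemma step2 (a c : ℝ) (ha : 0 < a) (x : ℝ) :
    HasDerivAt (fun y => c*y - a * c * (Real.exp (c*y) - (Real.exp (c*y))⁻¹) / Qa a c y)
      (c - a * c^2 * ((Real.exp (c*x) + (Real.exp (c*x))⁻¹) + 4*a) / (Qa a c x)^2) x := by
  have hu := hasDerivAt_ecx c x
  have hnum : HasDerivAt (fun y => a * c * (Real.exp (c*y) - (Real.exp (c*y))⁻¹))
      (a * c * (c * Real.exp (c*x) - (-(c * Real.exp (c*x)) / (Real.exp (c*x))^2))) x :=
    (hu.sub (hu.inv (Real.exp_ne_zero _))).const_mul (a*c)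
  have hdiv := hnum.div (hasDerivAt_Qa a c x) (Qa_pos a c x ha).ne'
  have hlin : HasDerivAt (fun y : ℝ => c*y) c x := by simpa using (hasDerivAt_id x).const_mul c
  refine (hlin.sub hdiv).congr_deriv ?_
  have hne : Real.exp (c*x) ≠ 0 := Real.exp_ne_zero _
  have hQne : Qa a c x ≠ 0 := (Qa_pos a c x ha).ne'
  unfold Qa at *
  field_simp
  ring

lemma step3 (a c : ℝ) (ha : 0 < a) (x : ℝ) :
    HasDerivAt (fun y => c - a * c^2 * ((Real.exp (c*y) + (Real.exp (c*y))⁻¹) + 4*a) / (Qa a c y)^2)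
      (-(a * c^3 * ((Real.exp (c*x) - (Real.exp (c*x))⁻¹) *
         (1 - a * (Real.exp (c*x) + (Real.exp (c*x))⁻¹) - 8*a^2))) / (Qa a c x)^3) x := by
  have hu := hasDerivAt_ecx c x
  have hnum : HasDerivAt (fun y => a * c^2 * ((Real.exp (c*y) + (Real.exp (c*y))⁻¹) + 4*a))
      (a * c^2 * (c * Real.exp (c*x) + -(c * Real.exp (c*x)) / (Real.exp (c*x))^2)) x :=
    (((hu.add (hu.inv (Real.exp_ne_zero _))).add_const (4*a)).const_mul (a*c^2))
  have hQsq : HasDerivAt (fun y => (Qa a c y)^2)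
      (2 * Qa a c x ^ 1 * (a * c * (Real.exp (c*x) - (Real.exp (c*x))⁻¹))) x := by
    simpa using (hasDerivAt_Qa a c x).fun_pow 2
  have hQsqne : (Qa a c x)^2 ≠ 0 := pow_ne_zero _ (Qa_pos a c x ha).ne'
  have hdiv := hnum.div hQsq hQsqne
  have := hdiv.const_sub c
  refine this.congr_deriv ?_
  have hne : Real.exp (c*x) ≠ 0 := Real.exp_ne_zero _
  have hQne : Qa a c x ≠ 0 := (Qa_pos a c x ha).ne'
  unfold Qa at *
  field_simp
  ring

lemma step4 (a c : ℝ) (ha : 0 < a) :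
    HasDerivAt (fun y => -(a * c^3 * ((Real.exp (c*y) - (Real.exp (c*y))⁻¹) *
         (1 - a * (Real.exp (c*y) + (Real.exp (c*y))⁻¹) - 8*a^2))) / (Qa a c y)^3)
      (-2 * a * c^4 * (1 - 2*a - 8*a^2) / (1 + 2*a)^3) 0 := by
  have hu := hasDerivAt_ecx c 0
  have hO : HasDerivAt (fun y => Real.exp (c*y) - (Real.exp (c*y))⁻¹)
      (c * Real.exp (c*0) - (-(c * Real.exp (c*0)) / (Real.exp (c*0))^2)) 0 :=
    hu.sub (hu.inv (Real.exp_ne_zero _))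
  have hE : HasDerivAt (fun y => 1 - a * (Real.exp (c*y) + (Real.exp (c*y))⁻¹) - 8*a^2)
      (-(a * ((c * Real.exp (c*0)) + (-(c * Real.exp (c*0)) / (Real.exp (c*0))^2)))) 0 := by
    exact (((hu.add (hu.inv (Real.exp_ne_zero _))).const_mul a).const_sub 1).sub_const (8*a^2)
  have hnum := ((hO.mul hE).const_mul (a*c^3)).neg
  have hQcube : HasDerivAt (fun y => (Qa a c y)^3)
      (3 * Qa a c 0 ^ 2 * (a * c * (Real.exp (c*0) - (Real.exp (c*0))⁻¹))) 0 := by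
    simpa using (hasDerivAt_Qa a c 0).fun_pow 3
  have hQcne : (Qa a c 0)^3 ≠ 0 := pow_ne_zero _ (Qa_pos a c 0 ha).ne'
  have hdiv := hnum.div hQcube hQcne
  refine hdiv.congr_deriv ?_
  have hQ0 : Qa a c 0 = 1 + 2*a := by
    unfold Qa
    rw [mul_zero, Real.exp_zero, inv_one]
    ring
  simp only [mul_zero, Real.exp_zero, hQ0, inv_one]
  have h2a : (1 + 2*a) ≠ 0 := by positivity
  field_simp
  ring

lemma key (β K : ℝ) :
    iteratedDeriv 4 (G β K) 0 =
      (4 - Real.exp β) * (2 * (2 * β * K) ^ 4 / (Real.exp β + 2) ^ 2) := by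
  set a := Real.exp (-β) with ha_def
  have ha : 0 < a := Real.exp_pos _
  set c := 2*β*K with hc_def
  have hd1 : deriv (G β K) = fun x => c*x - a * c * (Real.exp (c*x) - (Real.exp (c*x))⁻¹) / Qa a c x := by
    funext x
    have := (step1 β K x).deriv
    rw [this]
  have hd2 : deriv (fun x => c*x - a * c * (Real.exp (c*x) - (Real.exp (c*x))⁻¹) / Qa a c x)
      = fun x => c - a * c^2 * ((Real.exp (c*x) + (Real.exp (c*x))⁻¹) + 4*a) / (Qa a c x)^2 := by
    funext x; exact (step2 a c ha x).deriv
  have hd3 : deriv (fun x => c - a * c^2 * ((Real.exp (c*x) + (Real.exp (c*x))⁻¹) + 4*a) / (Qa a c x)^2)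
      = fun x => -(a * c^3 * ((Real.exp (c*x) - (Real.exp (c*x))⁻¹) *
         (1 - a * (Real.exp (c*x) + (Real.exp (c*x))⁻¹) - 8*a^2))) / (Qa a c x)^3 := by
    funext x; exact (step3 a c ha x).deriv
  have h4 : iteratedDeriv 4 (G β K) 0 = -2 * a * c^4 * (1 - 2*a - 8*a^2) / (1 + 2*a)^3 := by
    rw [show (4:ℕ) = 3+1 from rfl, iteratedDeriv_succ,
        show (3:ℕ) = 2+1 from rfl, iteratedDeriv_succ,
        show (2:ℕ) = 1+1 from rfl, iteratedDeriv_succ, iteratedDeriv_one]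
    rw [hd1, hd2, hd3]
    exact (step4 a c ha).deriv
  rw [h4]
  have he : Real.exp β ≠ 0 := Real.exp_ne_zero _
  have hepos : 0 < Real.exp β := Real.exp_pos _
  have haβ : a = (Real.exp β)⁻¹ := by rw [ha_def, Real.exp_neg]
  rw [haβ]
  have h1 : (1 + 2*(Real.exp β)⁻¹) ≠ 0 := by positivity
  have h2 : (Real.exp β + 2) ≠ 0 := by positivity
  field_simp
  ring
theorem stmt_18 (b Δ₁ : ℝ) (hb : b ≠ 0) (hΔ₁ : 0 < Δ₁)
    (βseq : ℕ → ℝ) (hβ : ∀ n, βseq n = Real.log (Real.exp (Real.log 4) - b / (n : ℝ) ^ Δ₁))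
    (Kseq : ℕ → ℝ)
    (hKtend : Filter.Tendsto Kseq Filter.atTop (nhds (3 / (2 * Real.log 4)))) :
    (∀ n : ℕ, 0 < Real.exp (Real.log 4) - b / (n : ℝ) ^ Δ₁ →
      iteratedDeriv 4 (G (βseq n) (Kseq n)) 0 =
        (b / (n : ℝ) ^ Δ₁) *
          (2 * (2 * βseq n * Kseq n) ^ 4 / (Real.exp (βseq n) + 2) ^ 2)) ∧
    Filter.Tendsto (fun n : ℕ => (n : ℝ) ^ Δ₁ * iteratedDeriv 4 (G (βseq n) (Kseq n)) 0)
      Filter.atTop (nhds ((9 / 2) * b)) := by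
  have h4pos : (0:ℝ) < 4 := by norm_num
  have hel4 : Real.exp (Real.log 4) = 4 := Real.exp_log h4pos
  have part1 : ∀ n : ℕ, 0 < Real.exp (Real.log 4) - b / (n : ℝ) ^ Δ₁ →
      iteratedDeriv 4 (G (βseq n) (Kseq n)) 0 =
        (b / (n : ℝ) ^ Δ₁) *
          (2 * (2 * βseq n * Kseq n) ^ 4 / (Real.exp (βseq n) + 2) ^ 2) := by
    intro n hn
    have hexp : Real.exp (βseq n) = 4 - b / (n : ℝ) ^ Δ₁ := by
      rw [hβ n, Real.exp_log hn, hel4]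
    rw [key, hexp]
    ring
  refine ⟨part1, ?_⟩
  have hlog4 : Real.log 4 ≠ 0 := (Real.log_pos (by norm_num)).ne'
  have hpow : Filter.Tendsto (fun n : ℕ => (n : ℝ) ^ Δ₁) Filter.atTop Filter.atTop :=
    (tendsto_rpow_atTop hΔ₁).comp tendsto_natCast_atTop_atTop
  have ht : Filter.Tendsto (fun n : ℕ => b / (n : ℝ) ^ Δ₁) Filter.atTop (nhds 0) := by
    simpa [div_eq_mul_inv] using (hpow.inv_tendsto_atTop.const_mul b)
  have hev : ∀ᶠ n : ℕ in Filter.atTop, 0 < Real.exp (Real.log 4) - b / (n : ℝ) ^ Δ₁ := by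
    have h1 : ∀ᶠ n : ℕ in Filter.atTop, b / (n : ℝ) ^ Δ₁ < 4 :=
      ht.eventually_lt_const (by norm_num : (0:ℝ) < 4)
    filter_upwards [h1] with n hn
    rw [hel4]; linarith
  have harg : Filter.Tendsto (fun n : ℕ => Real.exp (Real.log 4) - b / (n : ℝ) ^ Δ₁)
      Filter.atTop (nhds 4) := by
    rw [hel4] at *
    simpa using (tendsto_const_nhds.sub ht)
  have hβt : Filter.Tendsto βseq Filter.atTop (nhds (Real.log 4)) := by
    have := ((Real.continuousAt_log (by norm_num : (4:ℝ) ≠ 0)).tendsto).comp harg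
    refine Filter.Tendsto.congr (fun n => (hβ n).symm) this
  have hexpβ : Filter.Tendsto (fun n => Real.exp (βseq n)) Filter.atTop (nhds 4) := by
    have := (Real.continuous_exp.tendsto (Real.log 4)).comp hβt
    simpa [Function.comp_def, hel4] using this
  have hc : Filter.Tendsto (fun n => 2 * βseq n * Kseq n) Filter.atTop (nhds 3) := by
    have := (hβt.const_mul 2).mul hKtend
    have h3 : 2 * Real.log 4 * (3 / (2 * Real.log 4)) = 3 := by field_simp
    rw [h3] at this
    exact this
  have hL : Filter.Tendsto (fun n => 2 * (2 * βseq n * Kseq n) ^ 4 / (Real.exp (βseq n) + 2) ^ 2)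
      Filter.atTop (nhds (9/2)) := by
    have hnum := (hc.pow 4).const_mul 2
    have hden : Filter.Tendsto (fun n => (Real.exp (βseq n) + 2) ^ 2) Filter.atTop (nhds (((4:ℝ)+2)^2)) :=
      (hexpβ.add (tendsto_const_nhds (x := (2:ℝ)))).pow 2
    have := hnum.div hden (by norm_num : ((4:ℝ)+2)^2 ≠ 0)
    norm_num at this
    convert this using 2 <;> norm_num
  have hfin := hL.const_mul b
  refine Filter.Tendsto.congr' ?_ (by simpa [mul_comm] using hfin)
  filter_upwards [hev, Filter.eventually_ge_atTop 1] with n hn hn1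
  have hnpos : (0:ℝ) < (n : ℝ) ^ Δ₁ := by
    have : (1:ℝ) ≤ (n:ℝ) := by exact_mod_cast hn1
    positivity
  rw [part1 n hn]
  field_simp
end
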